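/- arXiv:2412.08094 — 4 statements merged into one kernel-verified Lean document; each statement's English description precedes it below -/
import Mathlib

section
/- Let E be a Hausdorff real topological vector space, X ⊆ E, n ≥ 2, x ∈ X, and φ : X_[n] → E a convex selection. Then there exist functions f^x : X_[n-1] → [0,1] and φ^x : X_[n-1] → E such that φ^x is a convex selection and φ(A ∪ {x}) = f^x(A)·x + (1 - f^x(A))·φ^x(A) for every A ∈ X_[n-1]. -/
/-- `X_[n]` for `X ⊆ E`: nonempty subsets of `X` of cardinality at most `n`. -/
abbrev SubsetsLE {E : Type*} (X : Set E) (n : ℕ) : Type _ :=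
  {A : Set E // A ⊆ X ∧ A.Nonempty ∧ A.Finite ∧ A.ncard ≤ n}

/-- Slicing a convex selection `φ : X_[n] → E` through a fixed point `x ∈ X`: there are
`f^x : X_[n-1] → [0,1]` and a convex selection `φ^x : X_[n-1] → E` with
`φ(A ∪ {x}) = f^x(A)·x + (1 - f^x(A))·φ^x(A)`. -/
theorem convex_selection_slice_exists
    {E : Type*} [AddCommGroup E] [Module ℝ E] [TopologicalSpace E] [T2Space E]
    (X : Set E) (n : ℕ) (hn : 2 ≤ n) (x : E) (hx : x ∈ X)
    (φ : SubsetsLE X n → E)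
    (hφ : ∀ A : SubsetsLE X n, φ A ∈ convexHull ℝ (A : Set E)) :
    ∃ (f : SubsetsLE X (n - 1) → ℝ) (φx : SubsetsLE X (n - 1) → E),
      (∀ A, f A ∈ Set.Icc (0 : ℝ) 1) ∧
      (∀ A : SubsetsLE X (n - 1), φx A ∈ convexHull ℝ (A : Set E)) ∧
      ∀ (A : SubsetsLE X (n - 1))
        (hA : ((A : Set E) ∪ {x}) ⊆ X ∧ ((A : Set E) ∪ {x}).Nonempty ∧
          ((A : Set E) ∪ {x}).Finite ∧ ((A : Set E) ∪ {x}).ncard ≤ n),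
        φ ⟨(A : Set E) ∪ {x}, hA⟩ = f A • x + (1 - f A) • φx A := by
  have key : ∀ A : SubsetsLE X (n - 1),
      ∃ t z, t ∈ Set.Icc (0 : ℝ) 1 ∧ z ∈ convexHull ℝ (A : Set E) ∧
        ∀ (hA : ((A : Set E) ∪ {x}) ⊆ X ∧ ((A : Set E) ∪ {x}).Nonempty ∧
            ((A : Set E) ∪ {x}).Finite ∧ ((A : Set E) ∪ {x}).ncard ≤ n),
          φ ⟨(A : Set E) ∪ {x}, hA⟩ = t • x + (1 - t) • z := by
    rintro ⟨A, hAX, hAne, hAfin, hAcard⟩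
    have hsub : A ∪ {x} ⊆ X := Set.union_subset hAX (by simpa using hx)
    have hfin : (A ∪ {x}).Finite := hAfin.union (Set.finite_singleton x)
    have hcard : (A ∪ {x}).ncard ≤ n := by
      rw [Set.union_singleton]
      calc (insert x A).ncard ≤ A.ncard + 1 := Set.ncard_insert_le x A
        _ ≤ (n - 1) + 1 := by omega
        _ ≤ n := by omega
    have hA : (A ∪ {x}) ⊆ X ∧ (A ∪ {x}).Nonempty ∧ (A ∪ {x}).Finite ∧
        (A ∪ {x}).ncard ≤ n := ⟨hsub, hAne.inl, hfin, hcard⟩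
    have hmem := hφ ⟨A ∪ {x}, hA⟩
    rw [show ((⟨A ∪ {x}, hA⟩ : SubsetsLE X n) : Set E) = insert x A from
      Set.union_singleton, convexHull_insert hAne] at hmem
    rw [mem_convexJoin] at hmem
    obtain ⟨x', hx', z, hz, hseg⟩ := hmem
    rw [Set.mem_singleton_iff] at hx'
    rw [hx'] at hseg
    obtain ⟨a, b, ha, hb, hab, habz⟩ := hseg
    refine ⟨a, z, ⟨ha, by linarith⟩, hz, fun hA' => ?_⟩
    have : (⟨A ∪ {x}, hA'⟩ : SubsetsLE X n) = ⟨A ∪ {x}, hA⟩ := rfl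
    rw [this]
    have : (1 : ℝ) - a = b := by linarith
    rw [this, habz]
  choose f φx hf hφx heq using key
  exact ⟨f, φx, hf, hφx, heq⟩
end

section
/- Let X and Y be compact Hausdorff spaces and π : Y → X a continuous open surjection such that every fiber π^{-1}(x) has at most n elements. Then the map ι_π : X → Y_[n] sending x to π^{-1}(x) is continuous for the Vietoris topology on Y_[n]. -/
/-- The Vietoris topology on the powerset of a topological space. -/
def vietorisTopology (Y : Type*) [TopologicalSpace Y] : TopologicalSpace (Set Y) :=
  TopologicalSpace.generateFrom
    ({S | ∃ U : Set Y, IsOpen U ∧ S = {A : Set Y | A ⊆ U}} ∪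
     {S | ∃ U : Set Y, IsOpen U ∧ S = {A : Set Y | (A ∩ U).Nonempty}})

instance instVietoris {Y : Type*} [TopologicalSpace Y] : TopologicalSpace (Set Y) :=
  vietorisTopology Y

/-- `Y_[n]`: nonempty subsets of `Y` of cardinality at most `n`, with the Vietoris topology. -/
abbrev Subn (Y : Type*) (n : ℕ) : Type _ :=
  {A : Set Y // A.Nonempty ∧ A.Finite ∧ A.ncard ≤ n}

/-- For a (≤ n)-branched cover `π : Y → X` of compact Hausdorff spaces (continuous open
surjection with fibers of cardinality ≤ n), the map `x ↦ π⁻¹(x)` is continuous into `Y_[n]`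
with the Vietoris topology. -/
theorem fiber_map_continuous
    {X Y : Type*} [TopologicalSpace X] [CompactSpace X] [T2Space X]
    [TopologicalSpace Y] [CompactSpace Y] [T2Space Y]
    (n : ℕ) (π : Y → X) (hcont : Continuous π) (hopen : IsOpenMap π)
    (hsurj : Function.Surjective π)
    (hne : ∀ x, (π ⁻¹' {x}).Nonempty) (hfin : ∀ x, (π ⁻¹' {x}).Finite)
    (hcard : ∀ x, (π ⁻¹' {x}).ncard ≤ n) :
    Continuous (fun x => (⟨π ⁻¹' {x}, hne x, hfin x, hcard x⟩ : Subn Y n)) := by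
  apply Continuous.subtype_mk
  refine continuous_generateFrom_iff.mpr ?_
  rintro S (⟨U, hU, rfl⟩ | ⟨U, hU, rfl⟩)
  · have h : (fun x => π ⁻¹' {x}) ⁻¹' {A : Set Y | A ⊆ U} = (π '' Uᶜ)ᶜ := by
      ext x
      simp only [Set.mem_preimage, Set.mem_setOf_eq, Set.mem_compl_iff, Set.mem_image,
        Set.subset_def, Set.mem_singleton_iff, not_exists, not_and]
      constructor
      · intro h y hy hyx
        exact hy (h y hyx)
      · intro h y hyx
        by_contra hyU
        exact h y hyU hyx
    rw [h]
    have hclosed : IsClosed (π '' Uᶜ) :=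
      ((hU.isClosed_compl.isCompact).image hcont).isClosed
    exact hclosed.isOpen_compl
  · have h : (fun x => π ⁻¹' {x}) ⁻¹' {A : Set Y | (A ∩ U).Nonempty} = π '' U := by
      ext x
      constructor
      · rintro ⟨y, hyx, hyU⟩
        exact ⟨y, hyU, hyx⟩
      · rintro ⟨y, hyU, hyx⟩
        exact ⟨y, hyx, hyU⟩
    rw [h]
    exact hopen U hU
end

section
/- Let Y be a compact Hausdorff space and n a positive integer. Define Y_[n]^⊆ := { (y, A) ∈ Y × Y_[n] : y ∈ A }. Then the second projection π_Y : Y_[n]^⊆ → Y_[n] is a continuous open surjection each of whose fibers has cardinality at most n, i.e. π_Y is an n-branched cover. -/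
/-- `Y_[n]^⊆ := {(y, A) : y ∈ A}`, with the subspace topology from `Y × Y_[n]`. -/
abbrev SubnIncl (Y : Type*) (n : ℕ) : Type _ :=
  {q : Y × Subn Y n // q.1 ∈ (q.2 : Set Y)}

/-- The second projection `π_Y : Y_[n]^⊆ → Y_[n]`. -/
abbrev piY (Y : Type*) (n : ℕ) : SubnIncl Y n → Subn Y n := fun p => p.1.2

open TopologicalSpace in
lemma vietoris_key {Y : Type*} [TopologicalSpace Y] {V : Set (Set Y)}
    (hV : GenerateOpen ({S | ∃ U : Set Y, IsOpen U ∧ S = {A : Set Y | A ⊆ U}} ∪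
     {S | ∃ U : Set Y, IsOpen U ∧ S = {A : Set Y | (A ∩ U).Nonempty}}) V) :
    ∀ A ∈ V, ∃ (U₀ : Set Y) (F : Finset (Set Y)), IsOpen U₀ ∧ (∀ u ∈ F, IsOpen u) ∧
      A ⊆ U₀ ∧ (∀ u ∈ F, (A ∩ u).Nonempty) ∧
      ∀ B : Set Y, B ⊆ U₀ → (∀ u ∈ F, (B ∩ u).Nonempty) → B ∈ V := by
  classical
  induction hV with
  | basic s hs =>
    intro A hA
    rcases hs with ⟨U, hU, rfl⟩ | ⟨U, hU, rfl⟩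
    · exact ⟨U, ∅, hU, by simp, hA, by simp, fun B hB _ => hB⟩
    · exact ⟨Set.univ, {U}, isOpen_univ, by simpa using hU, Set.subset_univ A,
        by simpa using hA, fun B _ h => by simpa using h U (Finset.mem_singleton_self U)⟩
  | univ =>
    intro A _
    exact ⟨Set.univ, ∅, isOpen_univ, by simp, Set.subset_univ A, by simp, by simp⟩
  | inter s t hs ht ihs iht =>
    intro A hA
    obtain ⟨U₁, F₁, h1, h2, h3, h4, h5⟩ := ihs A hA.1
    obtain ⟨U₂, F₂, g1, g2, g3, g4, g5⟩ := iht A hA.2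
    refine ⟨U₁ ∩ U₂, F₁ ∪ F₂, h1.inter g1, ?_, Set.subset_inter h3 g3, ?_, ?_⟩
    · intro u hu; rcases Finset.mem_union.1 hu with h | h
      exacts [h2 u h, g2 u h]
    · intro u hu; rcases Finset.mem_union.1 hu with h | h
      exacts [h4 u h, g4 u h]
    · intro B hB hF
      exact ⟨h5 B (hB.trans Set.inter_subset_left)
          (fun u hu => hF u (Finset.mem_union_left _ hu)),
        g5 B (hB.trans Set.inter_subset_right)
          (fun u hu => hF u (Finset.mem_union_right _ hu))⟩
  | sUnion S hS ih =>
    intro A hA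
    obtain ⟨s, hsS, hAs⟩ := hA
    obtain ⟨U₀, F, a1, a2, a3, a4, a5⟩ := ih s hsS A hAs
    exact ⟨U₀, F, a1, a2, a3, a4, fun B h1 h2 => ⟨s, hsS, a5 B h1 h2⟩⟩

open TopologicalSpace in
lemma vietoris_isOpen_sub {Y : Type*} [TopologicalSpace Y] {U : Set Y} (hU : IsOpen U) :
    IsOpen {A : Set Y | A ⊆ U} :=
  isOpen_generateFrom_of_mem (Or.inl ⟨U, hU, rfl⟩)

open TopologicalSpace in
lemma vietoris_isOpen_hit {Y : Type*} [TopologicalSpace Y] {U : Set Y} (hU : IsOpen U) :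
    IsOpen {A : Set Y | (A ∩ U).Nonempty} :=
  isOpen_generateFrom_of_mem (Or.inr ⟨U, hU, rfl⟩)

/-- For a compact Hausdorff space `Y`, the second projection `π_Y : Y_[n]^⊆ → Y_[n]` is a
continuous open surjection whose fibers have cardinality at most `n`: an `n`-branched cover. -/
theorem piY_branched_cover
    {Y : Type*} [TopologicalSpace Y] [CompactSpace Y] [T2Space Y] (n : ℕ) (hn : 0 < n) :
    Continuous (piY Y n) ∧ IsOpenMap (piY Y n) ∧ Function.Surjective (piY Y n) ∧
      ∀ A : Subn Y n, (piY Y n ⁻¹' {A}).ncard ≤ n := by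
  refine ⟨?_, ?_, ?_, ?_⟩
  · exact continuous_snd.comp continuous_subtype_val
  · -- open map
    intro W hW
    rw [isOpen_induced_iff] at hW
    obtain ⟨W', hW', hWW⟩ := hW
    rw [isOpen_iff_forall_mem_open]
    rintro A ⟨p, hpW, rfl⟩
    have hpW' : p.val ∈ W' := by rw [← hWW] at hpW; exact hpW
    obtain ⟨U, V, hU, hV, hyU, hAV, hUV⟩ := isOpen_prod_iff.1 hW' p.val.1 p.val.2 hpW'
    rw [isOpen_induced_iff] at hV
    obtain ⟨V₀, hV₀, hVV⟩ := hV
    have hAV₀ : (p.val.2 : Set Y) ∈ V₀ := by rw [← hVV] at hAV; exact hAV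
    obtain ⟨U₀, F, hU₀, hF, hAU₀, hAF, hkey⟩ := vietoris_key hV₀ _ hAV₀
    set T₀ : Set (Set Y) :=
      {B | B ⊆ U₀} ∩ {B | (B ∩ U).Nonempty} ∩ ⋂ u ∈ F, {B | (B ∩ u).Nonempty} with hT₀
    have hT₀open : IsOpen T₀ :=
      ((vietoris_isOpen_sub hU₀).inter (vietoris_isOpen_hit hU)).inter
        (isOpen_biInter_finset fun u hu => vietoris_isOpen_hit (hF u hu))
    refine ⟨Subtype.val ⁻¹' T₀, ?_, hT₀open.preimage continuous_subtype_val, ?_⟩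
    · rintro B hB
      obtain ⟨⟨hBU₀, hBU⟩, hBF⟩ := hB
      simp only [Set.mem_iInter] at hBF
      obtain ⟨y', hy'B, hy'U⟩ := hBU
      have hBV₀ : (B : Set Y) ∈ V₀ := hkey _ hBU₀ (fun u hu => hBF u hu)
      have hBV : B ∈ V := by rw [← hVV]; exact hBV₀
      refine ⟨⟨(y', B), hy'B⟩, ?_, rfl⟩
      rw [← hWW]
      exact hUV (Set.mk_mem_prod hy'U hBV)
    · refine ⟨⟨hAU₀, ⟨p.val.1, p.prop, hyU⟩⟩, ?_⟩
      simp only [Set.mem_iInter]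
      exact fun u hu => hAF u hu
  · -- surjective
    intro A
    obtain ⟨y, hy⟩ := A.prop.1
    exact ⟨⟨(y, A), hy⟩, rfl⟩
  · -- fibers
    intro A
    have h1 : ∀ p ∈ piY Y n ⁻¹' {A}, p.val.1 ∈ (A : Set Y) := by
      rintro p hp
      have hp' : p.val.2 = A := hp
      have := p.prop
      rw [hp'] at this
      exact this
    have h2 : Set.InjOn (fun p : SubnIncl Y n => p.val.1) (piY Y n ⁻¹' {A}) := by
      rintro p hp q hq h
      have hp' : p.val.2 = A := hp
      have hq' : q.val.2 = A := hq
      exact Subtype.ext (Prod.ext h (hp'.trans hq'.symm))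
    calc (piY Y n ⁻¹' {A}).ncard ≤ (A : Set Y).ncard :=
          Set.ncard_le_ncard_of_injOn _ h1 h2 A.prop.2.1
      _ ≤ n := A.prop.2.2
end

section
/- Let X, Y be compact Hausdorff spaces and π : Y → X a continuous open surjection with all fibers of cardinality at most n. Then the square with maps Y → Y_[n]^⊆, y ↦ (y, π^{-1}(π(y))); π : Y → X; π_Y : Y_[n]^⊆ → Y_[n]; and ι_π : X → Y_[n], x ↦ π^{-1}(x), commutes and is a pullback square in the category of topological spaces: the induced map from Y to the fiber product X ×_{Y_[n]} Y_[n]^⊆ is a homeomorphism. -/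
/-- A (≤ n)-branched cover `π : Y → X` is the pullback of the universal one
`π_Y : Y_[n]^⊆ → Y_[n]` along `ι_π : x ↦ π⁻¹(x)`: the canonical map from `Y` to the fiber
product `X ×_{Y_[n]} Y_[n]^⊆` (sending `y` to `(π y, (y, π⁻¹(π y)))`) is a homeomorphism. -/
theorem branched_cover_pullback
    {X Y : Type*} [TopologicalSpace X] [CompactSpace X] [T2Space X]
    [TopologicalSpace Y] [CompactSpace Y] [T2Space Y]
    (n : ℕ) (π : Y → X) (hcont : Continuous π) (hopen : IsOpenMap π)
    (hsurj : Function.Surjective π)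
    (hcard : ∀ x, (π ⁻¹' {x}).Finite ∧ (π ⁻¹' {x}).ncard ≤ n)
    (ι : X → Subn Y n) (hι : ∀ x, (ι x : Set Y) = π ⁻¹' {x}) :
    ∃ h : Y ≃ₜ {q : X × SubnIncl Y n // ι q.1 = q.2.1.2},
      ∀ y : Y, ((h y : X × SubnIncl Y n).1 = π y) ∧
        (((h y : X × SubnIncl Y n).2 : Y × Subn Y n).1 = y) := by
  classical
  -- continuity of y ↦ π⁻¹(π y) into Set Y with its Vietoris topology
  have hfib : Continuous (fun y : Y => (π ⁻¹' {π y} : Set Y)) := by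
    apply continuous_generateFrom_iff.mpr
    rintro S (⟨U, hU, rfl⟩ | ⟨U, hU, rfl⟩)
    · have hEq : (fun y : Y => (π ⁻¹' {π y} : Set Y)) ⁻¹' {A | A ⊆ U}
          = π ⁻¹' (π '' Uᶜ)ᶜ := by
        ext y
        simp only [Set.mem_preimage, Set.mem_setOf_eq, Set.mem_compl_iff, Set.mem_image]
        constructor
        · rintro h ⟨z, hz, hzy⟩
          exact hz (h (by simp [hzy]))
        · intro h z hz
          by_contra hzU
          exact h ⟨z, hzU, hz⟩
      rw [hEq]
      exact hcont.isOpen_preimage _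
        ((hU.isClosed_compl.isCompact.image hcont).isClosed.isOpen_compl)
    · have hEq : (fun y : Y => (π ⁻¹' {π y} : Set Y)) ⁻¹' {A | (A ∩ U).Nonempty}
          = π ⁻¹' (π '' U) := by
        ext y
        simp only [Set.mem_preimage, Set.mem_setOf_eq, Set.mem_image]
        constructor
        · rintro ⟨z, hz1, hz2⟩
          exact ⟨z, hz2, hz1⟩
        · rintro ⟨z, hz, hzy⟩
          exact ⟨z, by simp [hzy], hz⟩
      rw [hEq]
      exact hcont.isOpen_preimage _ (hopen U hU)
  have hιπ : (fun y : Y => ι (π y)) = fun y : Y =>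
      (⟨π ⁻¹' {π y}, ⟨y, rfl⟩, (hcard (π y)).1, (hcard (π y)).2⟩ : Subn Y n) :=
    funext fun y => Subtype.ext (hι (π y))
  have hιπcont : Continuous (fun y : Y => ι (π y)) := by
    rw [hιπ]
    exact hfib.subtype_mk _
  have hmemπ : ∀ y : Y, y ∈ (ι (π y) : Set Y) := fun y => by
    rw [hι]; exact rfl
  -- forward map
  let f : Y → {q : X × SubnIncl Y n // ι q.1 = q.2.1.2} := fun y =>
    ⟨(π y, ⟨(y, ι (π y)), hmemπ y⟩), rfl⟩
  -- inverse map
  let g : {q : X × SubnIncl Y n // ι q.1 = q.2.1.2} → Y := fun q => q.1.2.1.1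
  have hπg : ∀ q : {q : X × SubnIncl Y n // ι q.1 = q.2.1.2}, π (g q) = q.1.1 := by
    intro q
    have hm : q.1.2.1.1 ∈ (q.1.2.1.2 : Set Y) := q.1.2.2
    rw [← q.2, hι] at hm
    exact hm
  have hgf : Function.LeftInverse g f := fun y => rfl
  have hfg : Function.RightInverse g f := by
    intro q
    apply Subtype.ext
    apply Prod.ext
    · exact hπg q
    · apply Subtype.ext
      apply Prod.ext
      · rfl
      · show ι (π (g q)) = q.1.2.1.2
        rw [hπg q, q.2]
  have hfc : Continuous f := by
    apply Continuous.subtype_mk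
    exact hcont.prodMk ((continuous_id.prodMk hιπcont).subtype_mk _)
  have hgc : Continuous g :=
    continuous_fst.comp ((continuous_subtype_val.comp
      (continuous_snd.comp continuous_subtype_val)))
  exact ⟨⟨⟨f, g, hgf, hfg⟩, hfc, hgc⟩, fun y => ⟨rfl, rfl⟩⟩
end
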